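/- Let A be an integral domain. Then σ_g ≠ id_A for all g ∈ G \ {e} if and only if Ã is maximal commutative in A ⋊_α^σ G. -/
import Mathlib
set_option linter.unusedVariables false


/-- A `G`-crossed system `{A, G, σ, α}`: a unital ring `A`, a group `G`,
`σ : G → Aut(A)` and a `σ`-cocycle `α : G × G → U(A)` satisfying the
crossed-system axioms (i)-(iii). -/
structure CrossedSystem (A : Type*) [Ring A] (G : Type*) [Group G] where
  σ : G → RingAut A
  α : G → G → Aˣ
  compat : ∀ x y : G, ∀ a : A,
    σ x (σ y a) = (α x y : A) * σ (x * y) a * ((α x y)⁻¹ : Aˣ)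
  cocycle : ∀ x y z : G,
    (α x y : A) * (α (x * y) z : A) = σ x (α y z : A) * (α x (y * z) : A)
  unit_right : ∀ x : G, α x 1 = 1
  unit_left : ∀ x : G, α 1 x = 1

variable {A : Type*} [CommRing A] {G : Type*} [Group G]

/-- Multiplication of the crossed product `A ⋊_α^σ G`, realized on the free
left `A`-module `G →₀ A`: `(a x̄)(b ȳ) = a σ_x(b) α(x,y) (x*y)‾`. -/
noncomputable def cmul (C : CrossedSystem A G) (f g : G →₀ A) : G →₀ A :=
  f.sum fun s a => g.sum fun t b =>
    Finsupp.single (s * t) (a * C.σ s b * (C.α s t : A))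

/-- The element `1_A ē` of the crossed product. -/
noncomputable def cone : G →₀ A := Finsupp.single 1 1

/-- The canonical embedding `ι : A → A ⋊_α^σ G`, `a ↦ a ē`; its range is `Ã`. -/
noncomputable def cemb (a : A) : G →₀ A := Finsupp.single 1 a

/-- The commutant `Comm(Ã)` of the embedded base ring in the crossed product. -/
noncomputable def cCommutant (C : CrossedSystem A G) : Set (G →₀ A) :=
  {x | ∀ a : A, cmul C (cemb a) x = cmul C x (cemb a)}

/-- `I` is a (non-unital) two-sided ideal of the crossed product `A ⋊_α^σ G`. -/
def cIsIdeal (C : CrossedSystem A G) (I : Set (G →₀ A)) : Prop :=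
  0 ∈ I ∧ (∀ x ∈ I, ∀ y ∈ I, x + y ∈ I) ∧ (∀ x ∈ I, -x ∈ I) ∧
    (∀ x ∈ I, ∀ y : G →₀ A, cmul C y x ∈ I ∧ cmul C x y ∈ I)

lemma sigma_one_apply (C : CrossedSystem A G) (a : A) : C.σ 1 a = a := by
  have h := C.compat 1 1 a
  simp [C.unit_right] at h
  exact h

lemma cmul_cemb_left (C : CrossedSystem A G) (a : A) (x : G →₀ A) (t : G) :
    (cmul C (cemb a) x) t = a * x t := by
  classical
  unfold cmul cemb
  rw [Finsupp.sum_single_index]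
  · simp only [sigma_one_apply, C.unit_left, Units.val_one, mul_one, one_mul]
    rw [Finsupp.sum_apply]
    simp only [Finsupp.single_apply]
    rw [Finsupp.sum_ite_eq' x t (fun s b => a * b)]
    split_ifs with h
    · rfl
    · rw [Finsupp.notMem_support_iff.mp h, mul_zero]
  · simp

lemma cmul_cemb_right (C : CrossedSystem A G) (a : A) (x : G →₀ A) (t : G) :
    (cmul C x (cemb a)) t = x t * C.σ t a := by
  classical
  unfold cmul cemb
  have hx : (x.sum fun s b => (Finsupp.single 1 a).sum fun t c =>
      Finsupp.single (s * t) (b * C.σ s c * (C.α s t : A)))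
      = x.sum fun s b => Finsupp.single s (b * C.σ s a) := by
    apply Finsupp.sum_congr
    intro s _
    rw [Finsupp.sum_single_index (by simp)]
    simp [C.unit_right]
  rw [hx, Finsupp.sum_apply]
  simp only [Finsupp.single_apply]
  rw [Finsupp.sum_ite_eq' x t (fun s b => b * C.σ s a)]
  split_ifs with h
  · rfl
  · rw [Finsupp.notMem_support_iff.mp h, zero_mul]

theorem stmt_15 [IsDomain A] (C : CrossedSystem A G) (hG : ∃ g : G, g ≠ 1) :
    (∀ g : G, g ≠ 1 → ∃ a : A, C.σ g a ≠ a) ↔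
      cCommutant C = Set.range (cemb (A := A) (G := G)) := by
  classical
  have hmem : ∀ x : G →₀ A, x ∈ cCommutant C ↔ ∀ a : A, ∀ t : G, a * x t = x t * C.σ t a := by
    intro x
    constructor
    · intro hx a t
      have := DFunLike.congr_fun (hx a) t
      rwa [cmul_cemb_left, cmul_cemb_right] at this
    · intro hx a
      ext t
      rw [cmul_cemb_left, cmul_cemb_right]
      exact hx a t
  constructor
  · intro h
    ext x
    constructor
    · intro hx
      refine ⟨x 1, ?_⟩
      ext t
      by_cases ht : t = 1
      · subst ht; simp [cemb]
      · obtain ⟨a, ha⟩ := h t ht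
        have h2 := (hmem x).mp hx a t
        have h3 : x t * (C.σ t a - a) = 0 := by ring_nf; linear_combination -h2
        rcases mul_eq_zero.mp h3 with h4 | h4
        · simp [cemb, Finsupp.single_apply, Ne.symm ht, h4]
        · exact absurd (sub_eq_zero.mp h4) ha
    · rintro ⟨b, rfl⟩
      rw [hmem]
      intro a t
      by_cases ht : t = 1
      · subst ht; simp [cemb, sigma_one_apply, mul_comm]
      · simp [cemb, Finsupp.single_apply, Ne.symm ht]
  · intro h g hg
    by_contra hc
    push_neg at hc
    have hsg : Finsupp.single g (1 : A) ∈ cCommutant C := by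
      rw [hmem]
      intro a t
      by_cases ht : t = g
      · subst ht; simp [hc a]
      · simp [Finsupp.single_apply, Ne.symm ht]
    rw [h] at hsg
    obtain ⟨b, hb⟩ := hsg
    have : (if (1:G) = g then b else 0) = 1 := by
      have h5 := DFunLike.congr_fun hb g
      simpa [cemb, Finsupp.single_apply] using h5
    rw [if_neg (fun h' => hg h'.symm)] at this
    exact zero_ne_one this
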